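/- Let h satisfy Assumption H and set H_{1,T}(λ) = Σ_{t=−T}^{T} h(t/T) e^{−iλt} for λ ∈ Λ = (−π,π]. Then for every r with 1 < r ≤ ∞ there exists a constant C (depending only on h and r) such that ‖H_{1,T}‖_{L^r(Λ)} ≤ C T^{1 − 1/r} for all positive integers T. -/

import Mathlib

open MeasureTheory Filter Real Complex
open scoped ENNReal NNReal Topology

noncomputable section

/-- The frequency domain `Λ = (-π, π]`. -/
def Lam : Set ℝ := Set.Ioc (-Real.pi) Real.pi

/-- Assumption H: the taper `h` is an even positive (nonnegative) function of bounded
variation vanishing outside `[-1,1]`. -/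
def AssumptionH (h : ℝ → ℝ) : Prop :=
  (∀ t, h (-t) = h t) ∧ (∀ t, 0 ≤ h t) ∧ BoundedVariationOn h Set.univ ∧
    ∀ t : ℝ, 1 < |t| → h t = 0

/-- `H_{k,T}(x) = ∑_{t=-T}^{T} h(t/T)^k e^{-i x t}`. -/
def HT (h : ℝ → ℝ) (k T : ℕ) (x : ℝ) : ℂ :=
  ∑ t ∈ Finset.Icc (-(T : ℤ)) (T : ℤ),
    ((h ((t : ℝ) / (T : ℝ)) : ℝ) : ℂ) ^ k * Complex.exp (-(Complex.I * x * t))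

end

/-
Since `h` vanishes at `2`, `|h| ≤ V`, the total variation of `h`, so trivially
`|H(λ)| ≤ (2T+1) V`. Summation by parts against the geometric sums `∑ e^{-iλn}`, which are
bounded by `2 / |e^{-iλ} - 1| ≤ π / |λ|` (Jordan's inequality), gives `|λ| |H(λ)| ≤ 2πV`.
Together, `|H(λ)| ≤ K T / (1 + T|λ|)` on `Λ` with `K = (3 + 2π) V`, and the substitution
`y = Tλ` bounds the `L^r` norm of the right-hand side by
`K T^{1 - 1/r} ‖(1 + |y|)⁻¹‖_{L^r(ℝ)}`, which is finite precisely because `r > 1`.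
-/

open Finset

theorem norm_sum_range_smul_le_of_norm_partial_sum_le {𝕜 E : Type*} [NormedField 𝕜]
    [NormedAddCommGroup E] [NormedSpace 𝕜 E] (f : ℕ → 𝕜) (g : ℕ → E) (N : ℕ) {M : ℝ}
    (hg : ∀ n, ‖∑ i ∈ range n, g i‖ ≤ M) :
    ‖∑ i ∈ range N, f i • g i‖ ≤
      (‖f (N - 1)‖ + ∑ i ∈ range (N - 1), ‖f (i + 1) - f i‖) * M := by
  rw [sum_range_by_parts, add_mul, sum_mul]
  refine (norm_sub_le _ _).trans
    (add_le_add ?_ ((norm_sum_le _ _).trans (sum_le_sum fun i _ => ?_))) <;>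
  exact (norm_smul_le _ _).trans (mul_le_mul_of_nonneg_left (hg _) (norm_nonneg _))

theorem norm_geom_sum_le_of_norm_le_one {K : Type*} [NormedField K] {z : K} (hz : ‖z‖ ≤ 1)
    (hz1 : z ≠ 1) (n : ℕ) : ‖∑ i ∈ range n, z ^ i‖ ≤ 2 / ‖z - 1‖ := by
  rw [geom_sum_eq hz1, norm_div]
  gcongr
  calc ‖z ^ n - 1‖ ≤ ‖z‖ ^ n + ‖(1 : K)‖ := (norm_sub_le _ _).trans_eq (by rw [norm_pow])
    _ ≤ 2 := by rw [norm_one]; linarith [pow_le_one₀ (norm_nonneg z) hz (n := n)]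

theorem Complex.mul_abs_le_norm_exp_I_mul_sub_one {x : ℝ} (hx : |x| ≤ π) :
    2 / π * |x| ≤ ‖exp (I * x) - 1‖ := by
  have hx2 : |x / 2| ≤ π / 2 := by rw [abs_div, abs_two]; linarith
  rw [norm_exp_I_mul_ofReal_sub_one, norm_mul, Real.norm_eq_abs, Real.norm_eq_abs, abs_two]
  have := Real.mul_abs_le_abs_sin hx2
  rw [abs_div, abs_two] at this
  linarith

theorem BoundedVariationOn.sum_dist_le {α E : Type*} [LinearOrder α] [PseudoMetricSpace E]
    {f : α → E} {s : Set α} (hf : BoundedVariationOn f s) {u : ℕ → α} (hu : Monotone u)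
    (us : ∀ i, u i ∈ s) (n : ℕ) :
    ∑ i ∈ range n, dist (f (u (i + 1))) (f (u i)) ≤ (eVariationOn f s).toReal := by
  rw [← ENNReal.ofReal_le_ofReal_iff ENNReal.toReal_nonneg, ENNReal.ofReal_toReal hf,
    ENNReal.ofReal_sum_of_nonneg fun _ _ => dist_nonneg]
  simp_rw [← edist_dist]
  exact eVariationOn.sum_le hu us

theorem eLpNorm_comp_mul_left {E : Type*} [NormedAddCommGroup E] {g : ℝ → E}
    (hg : StronglyMeasurable g) {T : ℝ} (hT : 0 < T) (r : ℝ≥0∞) :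
    eLpNorm (fun x => g (T * x)) r volume =
      ENNReal.ofReal T ^ (-(1 / r).toReal) * eLpNorm g r volume := by
  rw [← Function.comp_def, ← eLpNorm_map_measure hg.aestronglyMeasurable
    (measurable_const_mul T).aemeasurable, Real.map_volume_mul_left hT.ne',
    eLpNorm_smul_measure_of_ne_zero (by simpa using hT.ne'), abs_of_pos (inv_pos.2 hT),
    ENNReal.ofReal_inv_of_pos hT, ENNReal.inv_rpow, ← ENNReal.rpow_neg, smul_eq_mul]

theorem memLp_one_add_abs_inv {r : ℝ≥0∞} (hr : 1 < r) :
    MemLp (fun y : ℝ => (1 + |y|)⁻¹) r volume := by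
  have hmeas : AEStronglyMeasurable (fun y : ℝ => (1 + |y|)⁻¹) volume := by fun_prop
  rcases eq_or_ne r ⊤ with rfl | hr_top
  · refine memLp_top_of_bound hmeas 1 (ae_of_all _ fun y => ?_)
    rw [norm_inv, Real.norm_of_nonneg (by positivity)]
    exact inv_le_one_of_one_le₀ (le_add_of_nonneg_right (abs_nonneg y))
  · rw [← integrable_norm_rpow_iff hmeas (zero_lt_one.trans hr).ne' hr_top]
    have hp : (Module.finrank ℝ ℝ : ℝ) < r.toReal := by
      simpa using (ENNReal.toReal_lt_toReal ENNReal.one_ne_top hr_top).2 hr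
    refine (integrable_one_add_norm (μ := volume) hp).congr (ae_of_all _ fun y => ?_)
    dsimp only
    have hpos : 0 ≤ 1 + |y| := by positivity
    rw [Real.norm_eq_abs, Real.norm_eq_abs, abs_inv, abs_of_nonneg hpos, Real.inv_rpow hpos,
      Real.rpow_neg hpos]

theorem eLpNorm_restrict_le_of_norm_mul_one_add_abs_le {E : Type*} [NormedAddCommGroup E]
    {f : ℝ → E} {s : Set ℝ} (hs : MeasurableSet s) {A : ℝ≥0} {T : ℝ} (hT : 0 < T)
    (hf : ∀ x ∈ s, ‖f x‖ * (1 + T * |x|) ≤ A * T) (r : ℝ≥0∞) :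
    eLpNorm f r (volume.restrict s) ≤
      A * eLpNorm (fun y : ℝ => (1 + |y|)⁻¹) r volume *
        ENNReal.ofReal T ^ (1 - (1 / r).toReal) := by
  set g : ℝ → ℝ := fun y => (1 + |y|)⁻¹
  have hbound : ∀ᵐ x ∂volume.restrict s, ‖f x‖ ≤ ((A : ℝ) * T) • g (T * x) := by
    refine ae_restrict_of_forall_mem hs fun x hx => ?_
    have hgTx : g (T * x) = (1 + T * |x|)⁻¹ := by simp [g, abs_mul, abs_of_pos hT]
    rw [smul_eq_mul, hgTx, ← div_eq_mul_inv, le_div_iff₀ (by positivity)]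
    exact hf x hx
  calc eLpNorm f r (volume.restrict s)
      ≤ eLpNorm (((A : ℝ) * T) • fun x => g (T * x)) r (volume.restrict s) :=
        eLpNorm_mono_ae_real hbound
    _ ≤ eLpNorm (((A : ℝ) * T) • fun x => g (T * x)) r volume :=
        eLpNorm_mono_measure _ Measure.restrict_le_self
    _ = A * ENNReal.ofReal T * (ENNReal.ofReal T ^ (-(1 / r).toReal) * eLpNorm g r volume) := by
        rw [eLpNorm_const_smul, eLpNorm_comp_mul_left (by fun_prop) hT, enorm_mul,
          Real.enorm_of_nonneg hT.le, Real.enorm_of_nonneg A.coe_nonneg, ENNReal.ofReal_coe_nnreal]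
    _ = A * eLpNorm g r volume * ENNReal.ofReal T ^ (1 - (1 / r).toReal) := by
        rw [sub_eq_add_neg, ENNReal.rpow_add _ _ (by simpa using hT) ENNReal.ofReal_ne_top,
          ENNReal.rpow_one]
        ring

theorem HT_one_eq_sum_range (h : ℝ → ℝ) (T : ℕ) (x : ℝ) :
    HT h 1 T x = exp (I * x) ^ T *
      ∑ n ∈ range (2 * T + 1), (h (((n : ℝ) - T) / T) : ℂ) * exp (I * ↑(-x)) ^ n := by
  rw [HT, mul_sum]
  refine sum_nbij' (fun t => (t + T).toNat) (fun n => (n : ℤ) - T) ?_ ?_ ?_ ?_ ?_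
  · intro t ht; simp only [mem_Icc, mem_range] at ht ⊢; omega
  · intro n hn; simp only [mem_Icc, mem_range] at hn ⊢; omega
  · intro t ht; simp only [mem_Icc] at ht; omega
  · intro n _; omega
  · intro t ht
    rw [mem_Icc] at ht
    obtain ⟨n, rfl⟩ : ∃ n : ℕ, t = n - T := ⟨(t + T).toNat, by omega⟩
    simp only [sub_add_cancel, Int.toNat_natCast, pow_one]
    rw [← Complex.exp_nat_mul, ← Complex.exp_nat_mul, mul_left_comm, ← Complex.exp_add]
    push_cast
    ring_nf

namespace AssumptionH

variable {h : ℝ → ℝ}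

theorem abs_le_variation (hH : AssumptionH h) (t : ℝ) :
    |h t| ≤ (eVariationOn h Set.univ).toReal := by
  have h2 : h 2 = 0 := hH.2.2.2 2 (by norm_num)
  simpa [h2, Real.dist_eq] using hH.2.2.1.dist_le (Set.mem_univ t) (Set.mem_univ 2)

theorem norm_HT_one_le (hH : AssumptionH h) {T : ℕ} (hT : 1 ≤ T) (x : ℝ) :
    ‖HT h 1 T x‖ ≤ 3 * T * (eVariationOn h Set.univ).toReal := by
  calc ‖HT h 1 T x‖
      ≤ ∑ t ∈ Icc (-(T : ℤ)) T, (eVariationOn h Set.univ).toReal := by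
        refine (norm_sum_le _ _).trans (sum_le_sum fun t _ => ?_)
        have : ‖exp (-(I * x * t))‖ = 1 := by rw [Complex.norm_exp]; simp
        rw [pow_one, norm_mul, this, mul_one, Complex.norm_real, Real.norm_eq_abs]
        exact hH.abs_le_variation _
    _ ≤ 3 * T * (eVariationOn h Set.univ).toReal := by
        rw [sum_const, Int.card_Icc, nsmul_eq_mul]
        have hcard : ((T : ℤ) + 1 - -(T : ℤ)).toNat = 2 * T + 1 := by omega
        gcongr
        rw [hcard]
        exact_mod_cast (by omega : 2 * T + 1 ≤ 3 * T)

theorem abs_mul_norm_HT_one_le (hH : AssumptionH h) (T : ℕ) {x : ℝ} (hx : |x| ≤ π) :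
    |x| * ‖HT h 1 T x‖ ≤ 2 * π * (eVariationOn h Set.univ).toReal := by
  set V := (eVariationOn h Set.univ).toReal
  have hV : 0 ≤ V := ENNReal.toReal_nonneg
  rcases eq_or_ne x 0 with rfl | hx0
  · simpa using mul_nonneg (mul_nonneg zero_le_two pi_pos.le) hV
  set z := exp (I * ↑(-x))
  have hjordan : 2 / π * |x| ≤ ‖z - 1‖ := by
    rw [← abs_neg x]
    exact mul_abs_le_norm_exp_I_mul_sub_one (by rwa [abs_neg])
  have hjordan_pos : 0 < 2 / π * |x| := by positivity
  have hz1 : z ≠ 1 := fun hz => by simp [hz] at hjordan; linarith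
  set u : ℕ → ℝ := fun n => ((n : ℝ) - T) / T
  have hu : Monotone u := fun m n hmn => by
    simp only [u]; gcongr
  have hvar : ∑ i ∈ range (2 * T), ‖(h (u (i + 1)) : ℂ) - h (u i)‖ ≤ V := by
    simp only [← ofReal_sub, norm_real, ← dist_eq_norm]
    exact BoundedVariationOn.sum_dist_le hH.2.2.1 hu (fun _ => Set.mem_univ _) _
  have hsum :
      ‖∑ n ∈ range (2 * T + 1), (h (u n) : ℂ) * z ^ n‖ ≤ (V + V) * (2 / ‖z - 1‖) := by
    refine (norm_sum_range_smul_le_of_norm_partial_sum_le (fun n => (h (u n) : ℂ)) (z ^ ·) _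
      (norm_geom_sum_le_of_norm_le_one (norm_exp_I_mul_ofReal _).le hz1)).trans ?_
    rw [Nat.add_sub_cancel]
    gcongr ?_ * _
    exact add_le_add (by simpa using hH.abs_le_variation _) hvar
  rw [HT_one_eq_sum_range, norm_mul, norm_pow, norm_exp_I_mul_ofReal, one_pow, one_mul]
  calc |x| * ‖∑ n ∈ range (2 * T + 1), (h (u n) : ℂ) * z ^ n‖
      ≤ |x| * ((V + V) * (2 / (2 / π * |x|))) := by gcongr; exact hsum.trans (by gcongr)
    _ = 2 * π * V := by field_simp; ring

theorem norm_HT_one_mul_one_add_le (hH : AssumptionH h) {T : ℕ}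
    (hT : 1 ≤ T) {x : ℝ} (hx : x ∈ Lam) :
    ‖HT h 1 T x‖ * (1 + T * |x|) ≤ (3 + 2 * π) * (eVariationOn h Set.univ).toReal * T := by
  set V := (eVariationOn h Set.univ).toReal
  have hxπ : |x| ≤ π := abs_le.2 ⟨hx.1.le, hx.2⟩
  calc ‖HT h 1 T x‖ * (1 + T * |x|) = ‖HT h 1 T x‖ + T * (|x| * ‖HT h 1 T x‖) := by ring
    _ ≤ 3 * T * V + T * (2 * π * V) :=
      add_le_add (hH.norm_HT_one_le hT x)
        (mul_le_mul_of_nonneg_left (hH.abs_mul_norm_HT_one_le T hxπ) (Nat.cast_nonneg T))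
    _ = (3 + 2 * π) * V * T := by ring

end AssumptionH

/-- For every `1 < r ≤ ∞` there is a constant `C` with
`‖H_{1,T}‖_{L^r(Λ)} ≤ C T^{1 - 1/r}` for all positive integers `T`. -/
theorem H1T_Lr_norm_bound
    (h : ℝ → ℝ) (hH : AssumptionH h) (r : ℝ≥0∞) (hr : 1 < r) :
    ∃ C : ℝ≥0, ∀ T : ℕ, 1 ≤ T →
      eLpNorm (fun x => HT h 1 T x) r (volume.restrict Lam) ≤
        (C : ℝ≥0∞) * (T : ℝ≥0∞) ^ ((1 : ℝ) - (1 / r).toReal) := by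
  set K : ℝ≥0 := ((3 + 2 * π) * (eVariationOn h Set.univ).toReal).toNNReal
  have hK : (K : ℝ) = (3 + 2 * π) * (eVariationOn h Set.univ).toReal :=
    Real.coe_toNNReal _ (by positivity)
  have hC : (K : ℝ≥0∞) * eLpNorm (fun y : ℝ => (1 + |y|)⁻¹) r volume ≠ ⊤ :=
    ENNReal.mul_ne_top ENNReal.coe_ne_top (memLp_one_add_abs_inv hr).eLpNorm_ne_top
  refine ⟨(K * eLpNorm (fun y : ℝ => (1 + |y|)⁻¹) r volume).toNNReal, fun T hT => ?_⟩
  have hTpos : (0 : ℝ) < T := by exact_mod_cast hT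
  have := eLpNorm_restrict_le_of_norm_mul_one_add_abs_le measurableSet_Ioc hTpos
    (fun x hx => hK ▸ hH.norm_HT_one_mul_one_add_le hT hx) r
  rwa [ENNReal.ofReal_natCast, ← ENNReal.coe_toNNReal hC] at this
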